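/- arXiv:2006.07806 — 3 statements merged into one kernel-verified Lean document; each statement's English description precedes it below -/
import Mathlib

section
/- For a partition p = (p_1 ≥ p_2 ≥ ... ≥ p_m ≥ 0) with p_1 ≤ m and all positive entries distinct, and ℓ = (m, m-1, ..., 2, 1), the multiset of entries of ℓ - p (coordinatewise difference) equals the multiset of entries of ℓ - p^t, where p^t is the conjugate (transpose) partition of p padded to length m. Equivalently: sorting the vector ℓ - p in weakly decreasing order yields exactly the vector ℓ - p^t. -/
/-! Entrywise, `ℓ - p` is `m - (i + p i)` and `ℓ - pᵗ` is `m - (j + pᵗ j)`, so it suffices that the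
multisets `{i + μ i}` and `{j + μᵗ j}` agree for every partition `μ` in the `m × m` box. Both are
determined by the counts `#{i | i + μ i < d}`. Row `i < d` meets the antidiagonal `i + j = d - 1`
of the diagram exactly when `d ≤ i + μ i`, so `#{i | i + μ i < d}` is `min d m` minus the number
of cells of `μ` on that antidiagonal; counting the same cells by columns gives the same expression
for `μᵗ`. -/

open Finset

theorem Multiset.count_add_card_filter_lt (u : Multiset ℕ) (d : ℕ) :
    u.count d + (u.filter (· < d)).card = (u.filter (· < d + 1)).card := by
  rw [Multiset.count_eq_card_filter_eq, ← Multiset.card_add, Multiset.filter_add_filter,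
    (Multiset.filter_eq_nil (p := fun a => d = a ∧ a < d)).2 fun x _ h => h.2.ne' h.1,
    add_zero]
  congr 1
  exact Multiset.filter_congr fun x _ => by omega

theorem Multiset.eq_of_forall_card_filter_lt_eq {s t : Multiset ℕ}
    (h : ∀ d, (s.filter (· < d)).card = (t.filter (· < d)).card) : s = t := by
  ext d
  have hs := s.count_add_card_filter_lt d
  have ht := t.count_add_card_filter_lt d
  rw [h, h] at hs
  omega

section Conjugate

variable {m : ℕ}

def conjugate (μ : Fin m → ℕ) (j : Fin m) : ℕ := #{k | j.val + 1 ≤ μ k}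

theorem conjugate_le (μ : Fin m → ℕ) (j : Fin m) : conjugate μ j ≤ m :=
  (card_filter_le _ _).trans (card_fin m).le

theorem lt_conjugate_iff {μ : Fin m → ℕ} (hμ : Antitone μ) (i j : Fin m) :
    i.val < conjugate μ j ↔ j.val < μ i := by
  unfold conjugate
  constructor
  · intro h
    by_contra! hle
    have hsub : ({k | j.val + 1 ≤ μ k} : Finset (Fin m)) ⊆ Iio i := fun k hk => by
      by_contra hki
      have := hμ (not_lt.1 (mt mem_Iio.2 hki))
      simp only [mem_filter, mem_univ, true_and] at hk
      omega
    have := card_le_card hsub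
    rw [Fin.card_Iio] at this
    omega
  · intro h
    have hsub : Iic i ⊆ ({k | j.val + 1 ≤ μ k} : Finset (Fin m)) := fun k hk => by
      have := hμ (mem_Iic.1 hk)
      simp only [mem_filter, mem_univ, true_and]
      omega
    have := card_le_card hsub
    rw [Fin.card_Iic] at this
    omega

/-- The rows `i` for which the cell `(i, d - 1 - i)` lies in the diagram of `f`. -/
def antidiagonalRows (f : Fin m → ℕ) (d : ℕ) : Finset (Fin m) :=
  {i | i.val < d ∧ d ≤ i.val + f i}

theorem card_filter_add_lt_add_card_antidiagonalRows (f : Fin m → ℕ) (d : ℕ) :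
    #{i | i.val + f i < d} + #(antidiagonalRows f d) = #{i : Fin m | i.val < d} := by
  rw [antidiagonalRows, ← card_filter_add_card_filter_not (s := {i : Fin m | i.val < d})
    (fun i => i.val + f i < d), filter_filter, filter_filter]
  congr 2 <;> ext i <;> simp only [mem_filter, mem_univ, true_and] <;> omega

theorem card_antidiagonalRows_conjugate {μ : Fin m → ℕ} (hμ : Antitone μ)
    (hbound : ∀ i, μ i ≤ m) (d : ℕ) :
    #(antidiagonalRows (conjugate μ) d) = #(antidiagonalRows μ d) := by
  refine card_bij' (fun j _ => ⟨d - 1 - j, ?_⟩) (fun i _ => ⟨d - 1 - i, ?_⟩) ?_ ?_ ?_ ?_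
  all_goals simp only [antidiagonalRows, mem_filter, mem_univ, true_and, Fin.ext_iff] at *
  · have := conjugate_le μ j
    omega
  · have := hbound i
    omega
  · intro j hj
    have hj' : d - 1 - j < conjugate μ j := by omega
    have := (lt_conjugate_iff hμ ⟨d - 1 - j, hj'.trans_le (conjugate_le μ j)⟩ j).1 hj'
    omega
  · intro i hi
    have hi' : d - 1 - i < μ i := by omega
    have := (lt_conjugate_iff hμ i ⟨d - 1 - i, hi'.trans_le (hbound i)⟩).2 hi'
    omega
  · omega
  · omega

theorem map_add_eq_map_add_conjugate {μ : Fin m → ℕ} (hμ : Antitone μ) (hbound : ∀ i, μ i ≤ m) :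
    univ.val.map (fun i : Fin m => i.val + μ i) =
      univ.val.map (fun j : Fin m => j.val + conjugate μ j) := by
  refine Multiset.eq_of_forall_card_filter_lt_eq fun d => ?_
  have hμd := card_filter_add_lt_add_card_antidiagonalRows μ d
  have hconjd := card_filter_add_lt_add_card_antidiagonalRows (conjugate μ) d
  rw [card_antidiagonalRows_conjugate hμ hbound] at hconjd
  simp only [Multiset.filter_map, Multiset.card_map, ← filter_val, card_val, Function.comp_def]
  omega

end Conjugate

theorem stmt_3_general (m : ℕ) (p : Fin m → ℕ)
    (hdec : ∀ i j : Fin m, i ≤ j → p j ≤ p i)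
    (hbound : ∀ i : Fin m, p i ≤ m) :
    Multiset.map (fun i : Fin m => (m - i.val) - p i) Finset.univ.val =
    Multiset.map (fun i : Fin m =>
      (m - i.val) - (Finset.univ.filter (fun j : Fin m => i.val + 1 ≤ p j)).card)
      Finset.univ.val := by
  have key := congrArg (Multiset.map (m - ·))
    (map_add_eq_map_add_conjugate (fun i j h => hdec i j h) hbound)
  simpa only [Multiset.map_map, Function.comp_def, Nat.sub_sub, conjugate] using key

/-- For a weakly decreasing `p : Fin m → ℕ` with `p 0 ≤ m` and all positive
entries pairwise distinct, and the staircase `ℓ i = m - i` (0-indexed, so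
`ℓ = (m, m-1, …, 1)`), the multiset of entries of `ℓ - p` equals the multiset
of entries of `ℓ - pᵗ`, where `pᵗ i = #{j : p j ≥ i + 1}` is the conjugate
partition padded to length `m`. -/
theorem stmt_3 (m : ℕ) (p : Fin m → ℕ)
    (hdec : ∀ i j : Fin m, i ≤ j → p j ≤ p i)
    (hbound : ∀ i : Fin m, p i ≤ m)
    (hdist : ∀ i j : Fin m, i ≠ j → 0 < p i → 0 < p j → p i ≠ p j) :
    Multiset.map (fun i : Fin m => (m - i.val) - p i) Finset.univ.val =
    Multiset.map (fun i : Fin m =>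
      (m - i.val) - (Finset.univ.filter (fun j : Fin m => i.val + 1 ≤ p j)).card)
      Finset.univ.val :=
  stmt_3_general m p hdec hbound
end

section
/- For a strictly decreasing partition p contained in the staircase (m, m-1, ..., 1), i.e., p_i ≤ m - i + 1 for each i with p_i > 0 and positive parts distinct, the skew shape ℓ/p (where ℓ is the staircase partition (m, m-1, ..., 1)) has the same multiset of row lengths as column lengths of the conjugate skew shape; equivalently the row lengths of ℓ/p, sorted, coincide with the column lengths of ℓ/p, sorted. -/
/-- Conjugation duality: the number of parts of `p` that are `≥ c + 1` is at most `k`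
iff the `k`-th part of `p` is at most `c` (for weakly decreasing `p`). -/
lemma stmt_4_tcard {m : ℕ} (p : Fin m → ℕ) (hdec : ∀ i j : Fin m, i ≤ j → p j ≤ p i)
    (c : ℕ) (k : Fin m) :
    ((Finset.univ.filter (fun i : Fin m => c + 1 ≤ p i)).card ≤ k.val ↔ p k ≤ c) := by
  constructor
  · intro h
    by_contra hc
    push_neg at hc
    have hsubset : Finset.Iic k ⊆ Finset.univ.filter (fun i : Fin m => c + 1 ≤ p i) := by
      intro i hi
      simp only [Finset.mem_Iic] at hi
      simp only [Finset.mem_filter, Finset.mem_univ, true_and]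
      exact le_trans hc (hdec i k hi)
    have h2 := Finset.card_le_card hsubset
    rw [Fin.card_Iic] at h2
    omega
  · intro h
    have hsubset : Finset.univ.filter (fun i : Fin m => c + 1 ≤ p i) ⊆ Finset.Iio k := by
      intro i hi
      simp only [Finset.mem_filter, Finset.mem_univ, true_and] at hi
      simp only [Finset.mem_Iio]
      by_contra hik
      push_neg at hik
      have := hdec k i hik
      omega
    have h2 := Finset.card_le_card hsubset
    rwa [Fin.card_Iio] at h2

/-- Cumulative counts of `i + p i` and `j + pᵗ j` agree, via an explicit bijection. -/
lemma stmt_4_cum_eq (m : ℕ) (p : Fin m → ℕ)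
    (hdec : ∀ i j : Fin m, i ≤ j → p j ≤ p i)
    (hsub : ∀ i : Fin m, p i ≤ m - i.val) (v : ℕ) :
    (Finset.univ.filter (fun i : Fin m => i.val + p i ≤ v)).card =
    (Finset.univ.filter (fun j : Fin m => j.val +
       (Finset.univ.filter (fun i : Fin m => j.val + 1 ≤ p i)).card ≤ v)).card := by
  have htm : ∀ j : Fin m,
      (Finset.univ.filter (fun i : Fin m => j.val + 1 ≤ p i)).card ≤ m := by
    intro j
    calc (Finset.univ.filter (fun i : Fin m => j.val + 1 ≤ p i)).card
        ≤ (Finset.univ : Finset (Fin m)).card :=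
          Finset.card_le_card (Finset.filter_subset _ _)
    _ = m := by simp
  apply Finset.card_bij (fun i hi =>
    if h : v < i.val + m then (⟨v - i.val, by omega⟩ : Fin m) else i)
  · -- maps to
    intro i hi
    simp only [Finset.mem_filter, Finset.mem_univ, true_and] at hi ⊢
    by_cases h : v < i.val + m
    · rw [dif_pos h]
      simp only [Fin.val_mk]
      have hiv : i.val ≤ v := le_trans (Nat.le_add_right _ _) hi
      have hkey :
          (Finset.univ.filter (fun i' : Fin m => (v - i.val) + 1 ≤ p i')).card ≤ i.val :=
        (stmt_4_tcard p hdec (v - i.val) i).mpr (by omega)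
      have hconv :
          (Finset.univ.filter (fun i' : Fin m =>
            (⟨v - i.val, by omega⟩ : Fin m).val + 1 ≤ p i')).card ≤ i.val := hkey
      omega
    · rw [dif_neg h]
      have := htm i
      omega
  · -- injective
    intro a ha b hb hab
    simp only [Finset.mem_filter, Finset.mem_univ, true_and] at ha hb
    by_cases h1 : v < a.val + m <;> by_cases h2 : v < b.val + m <;>
      simp only [dif_pos, dif_neg, h1, h2] at hab
    · have h3 : v - a.val = v - b.val := congrArg Fin.val hab
      apply Fin.ext
      omega
    · have h3 : v - a.val = b.val := congrArg Fin.val hab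
      have := b.isLt
      omega
    · have h3 : a.val = v - b.val := congrArg Fin.val hab
      have := a.isLt
      omega
    · exact hab
  · -- surjective
    intro j hj
    simp only [Finset.mem_filter, Finset.mem_univ, true_and] at hj
    have hjv : j.val ≤ v := le_trans (Nat.le_add_right _ _) hj
    have hjm := j.isLt
    by_cases h : v < j.val + m
    · have hlt : v - j.val < m := by omega
      refine ⟨⟨v - j.val, hlt⟩, ?_, ?_⟩
      · simp only [Finset.mem_filter, Finset.mem_univ, true_and, Fin.val_mk]
        have hkey : p ⟨v - j.val, hlt⟩ ≤ j.val :=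
          (stmt_4_tcard p hdec j.val ⟨v - j.val, hlt⟩).mp (by simp only [Fin.val_mk]; omega)
        omega
      · rw [dif_pos (show v < (⟨v - j.val, hlt⟩ : Fin m).val + m by
          simp only [Fin.val_mk]; omega)]
        apply Fin.ext
        simp only [Fin.val_mk]
        omega
    · refine ⟨j, ?_, ?_⟩
      · simp only [Finset.mem_filter, Finset.mem_univ, true_and]
        have := hsub j
        omega
      · rw [dif_neg h]

lemma stmt_4_count_as_filter {m : ℕ} (f : Fin m → ℕ) (a : ℕ) :
    Multiset.count a (Multiset.map f Finset.univ.val) =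
    (Finset.univ.filter (fun i : Fin m => f i = a)).card := by
  rw [Multiset.count_map]
  show Multiset.card _ = Multiset.card (Multiset.filter _ Finset.univ.val)
  congr 1
  apply Multiset.filter_congr
  intro x _
  exact eq_comm

lemma stmt_4_cum_split {m : ℕ} (f : Fin m → ℕ) (n : ℕ) :
    (Finset.univ.filter (fun i : Fin m => f i ≤ n + 1)).card =
    (Finset.univ.filter (fun i : Fin m => f i ≤ n)).card +
    (Finset.univ.filter (fun i : Fin m => f i = n + 1)).card := by
  rw [← Finset.card_union_of_disjoint]
  · congr 1
    ext i
    simp only [Finset.mem_union, Finset.mem_filter, Finset.mem_univ, true_and]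
    omega
  · rw [Finset.disjoint_filter]
    intro i _ h1 h2
    omega

/-- Two tuples of naturals with the same cumulative counting functions give
equal multisets. -/
lemma stmt_4_multiset_eq_of_cum {m : ℕ} (f g : Fin m → ℕ)
    (h : ∀ v : ℕ, (Finset.univ.filter (fun i : Fin m => f i ≤ v)).card =
        (Finset.univ.filter (fun i : Fin m => g i ≤ v)).card) :
    Multiset.map f Finset.univ.val = Multiset.map g Finset.univ.val := by
  ext a
  rw [stmt_4_count_as_filter, stmt_4_count_as_filter]
  cases a with
  | zero =>
      have h0 := h 0
      have e1 : (Finset.univ.filter (fun i : Fin m => f i ≤ 0)) =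
          (Finset.univ.filter (fun i : Fin m => f i = 0)) := by
        apply Finset.filter_congr; intro i _; simp [Nat.le_zero]
      have e2 : (Finset.univ.filter (fun i : Fin m => g i ≤ 0)) =
          (Finset.univ.filter (fun i : Fin m => g i = 0)) := by
        apply Finset.filter_congr; intro i _; simp [Nat.le_zero]
      rw [e1, e2] at h0
      exact h0
  | succ n =>
      have h1 := h n
      have h2 := h (n + 1)
      have s1 := stmt_4_cum_split f n
      have s2 := stmt_4_cum_split g n
      omega

/-- Let `ℓ = (m, m-1, …, 1)` be the staircase partition and `p ⊆ ℓ` a partition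
(weakly decreasing, `p i ≤ m - i` in 0-indexing) with all positive parts
pairwise distinct.  The multiset of row lengths `ℓ_i - p_i` of the skew shape
`ℓ/p` equals the multiset of its column lengths `(m - j) - pᵗ_j`, where
`pᵗ j = #{i : p i ≥ j + 1}`. -/
theorem stmt_4 (m : ℕ) (p : Fin m → ℕ)
    (hdec : ∀ i j : Fin m, i ≤ j → p j ≤ p i)
    (hsub : ∀ i : Fin m, p i ≤ m - i.val)
    (hdist : ∀ i j : Fin m, i ≠ j → 0 < p i → 0 < p j → p i ≠ p j) :
    Multiset.map (fun i : Fin m => (m - i.val) - p i) Finset.univ.val =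
    Multiset.map (fun j : Fin m =>
      (m - j.val) - (Finset.univ.filter (fun i : Fin m => j.val + 1 ≤ p i)).card)
      Finset.univ.val := by
  have key : Multiset.map (fun i : Fin m => i.val + p i) Finset.univ.val =
      Multiset.map (fun j : Fin m => j.val +
        (Finset.univ.filter (fun i : Fin m => j.val + 1 ≤ p i)).card)
        Finset.univ.val :=
    stmt_4_multiset_eq_of_cum _ _ (stmt_4_cum_eq m p hdec hsub)
  calc
    Multiset.map (fun i : Fin m => (m - i.val) - p i) Finset.univ.val
        = Multiset.map (fun i : Fin m => m - (i.val + p i)) Finset.univ.val := by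
          apply Multiset.map_congr rfl
          intro x _
          exact Nat.sub_sub m x.val (p x)
    _ = Multiset.map (fun x => m - x)
          (Multiset.map (fun i : Fin m => i.val + p i) Finset.univ.val) := by
          rw [Multiset.map_map]; rfl
    _ = Multiset.map (fun x => m - x)
          (Multiset.map (fun j : Fin m => j.val +
            (Finset.univ.filter (fun i : Fin m => j.val + 1 ≤ p i)).card)
            Finset.univ.val) := by rw [key]
    _ = Multiset.map (fun j : Fin m => m - (j.val +
          (Finset.univ.filter (fun i : Fin m => j.val + 1 ≤ p i)).card))
          Finset.univ.val := by rw [Multiset.map_map]; rfl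
    _ = Multiset.map (fun j : Fin m =>
          (m - j.val) - (Finset.univ.filter (fun i : Fin m => j.val + 1 ≤ p i)).card)
          Finset.univ.val := by
          apply Multiset.map_congr rfl
          intro x _
          exact (Nat.sub_sub m x.val _).symm
end

section
/- Let q, r be positive integers and μ ∈ ℤ^{q+r} a weakly decreasing tuple. Suppose w is a permutation of the q+r coordinates of μ + ρ (ρ strictly decreasing) such that the first q coordinates of w(μ+ρ) are strictly decreasing and the last r coordinates are strictly decreasing, where w is not the identity. Then the sum of the first q coordinates of w(μ+ρ) - ρ is strictly less than the sum of the first q coordinates of μ, and the sum of the last r coordinates of w(μ+ρ) - ρ is strictly greater than the sum of the last r coordinates of μ. -/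
/-!
Put `ν = μ + ρ`, a strictly decreasing tuple. On each block `w` is increasing (because `ν ∘ w`
is decreasing there), so `w` can only push first-block indices to the right and last-block
indices to the left; hence `ν (w i) ≤ ν i` on the first block and `ν i ≤ ν (w i)` on the last.
As `ν ∘ w` and `ν` have the same total sum and `w` moves some index, both inequalities between
block sums are strict. Subtracting `ρ` gives the claim.
-/

open Finset Function

namespace Fin

variable {n : ℕ} {f : Fin n → Fin n}

theorem le_apply_of_forall_lt_apply_lt (hf : Injective f) {i : Fin n}
    (h : ∀ j < i, f j < f i) : i ≤ f i := by
  have hsub : (Iio i).image f ⊆ Iio (f i) := by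
    intro x hx
    obtain ⟨j, hj, rfl⟩ := mem_image.mp hx
    exact mem_Iio.mpr (h j (mem_Iio.mp hj))
  have hcard := card_le_card hsub
  rwa [card_image_of_injective _ hf, Fin.card_Iio, Fin.card_Iio, ← Fin.le_def] at hcard

theorem apply_le_of_forall_lt_apply_lt (hf : Injective f) {i : Fin n}
    (h : ∀ j, i < j → f i < f j) : f i ≤ i := by
  have hsub : (Ioi i).image f ⊆ Ioi (f i) := by
    intro x hx
    obtain ⟨j, hj, rfl⟩ := mem_image.mp hx
    exact mem_Ioi.mpr (h j (mem_Ioi.mp hj))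
  have hcard := card_le_card hsub
  rw [card_image_of_injective _ hf, Fin.card_Ioi, Fin.card_Ioi] at hcard
  have := (f i).isLt
  exact Fin.le_def.mpr (by omega)

end Fin

namespace Equiv.Perm

variable {ι M : Type*} [Fintype ι] [AddCommMonoid M] [PartialOrder M]
  [IsOrderedCancelAddMonoid M]

theorem sum_filter_comp_lt_of_le (σ : Perm ι) (hσ : σ ≠ 1) {ν : ι → M} (hν : Injective ν)
    (p : ι → Prop) [DecidablePred p] (hle : ∀ i, p i → ν (σ i) ≤ ν i)
    (hge : ∀ i, ¬p i → ν i ≤ ν (σ i)) :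
    ∑ i ∈ univ.filter p, ν (σ i) < ∑ i ∈ univ.filter p, ν i ∧
      ∑ i ∈ univ.filter (¬p ·), ν i < ∑ i ∈ univ.filter (¬p ·), ν (σ i) := by
  have htot : ∑ i ∈ univ.filter p, ν (σ i) + ∑ i ∈ univ.filter (¬p ·), ν (σ i)
      = ∑ i ∈ univ.filter p, ν i + ∑ i ∈ univ.filter (¬p ·), ν i := by
    rw [sum_filter_add_sum_filter_not, sum_filter_add_sum_filter_not]
    exact Equiv.sum_comp σ ν
  have hP : ∑ i ∈ univ.filter p, ν (σ i) ≤ ∑ i ∈ univ.filter p, ν i :=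
    sum_le_sum fun i hi => hle i (mem_filter.mp hi).2
  have hN : ∑ i ∈ univ.filter (¬p ·), ν i ≤ ∑ i ∈ univ.filter (¬p ·), ν (σ i) :=
    sum_le_sum fun i hi => hge i (mem_filter.mp hi).2
  obtain ⟨i₀, hi₀⟩ : ∃ i, σ i ≠ i := by
    by_contra! h
    exact hσ (Equiv.ext h)
  have hne : ν (σ i₀) ≠ ν i₀ := hν.ne hi₀
  by_cases hp : p i₀
  · have hPlt : ∑ i ∈ univ.filter p, ν (σ i) < ∑ i ∈ univ.filter p, ν i :=
      sum_lt_sum (fun i hi => hle i (mem_filter.mp hi).2)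
        ⟨i₀, by simpa using hp, lt_of_le_of_ne (hle i₀ hp) hne⟩
    refine ⟨hPlt, lt_of_le_of_ne hN fun heq => ?_⟩
    rw [heq] at htot
    exact hPlt.ne (add_right_cancel htot)
  · have hNlt : ∑ i ∈ univ.filter (¬p ·), ν i < ∑ i ∈ univ.filter (¬p ·), ν (σ i) :=
      sum_lt_sum (fun i hi => hge i (mem_filter.mp hi).2)
        ⟨i₀, by simpa using hp, lt_of_le_of_ne (hge i₀ hp) hne.symm⟩
    refine ⟨lt_of_le_of_ne hP fun heq => ?_, hNlt⟩
    rw [heq] at htot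
    exact hNlt.ne (add_left_cancel htot).symm

end Equiv.Perm

theorem stmt_13_general (q r : ℕ)
    (μ ρ : Fin (q + r) → ℤ)
    (hμ : ∀ i j : Fin (q + r), i ≤ j → μ j ≤ μ i)
    (hρ : ∀ i j : Fin (q + r), i < j → ρ j < ρ i)
    (w : Equiv.Perm (Fin (q + r))) (hw : w ≠ 1)
    (hfirst : ∀ i j : Fin (q + r), i < j → j.val < q →
      μ (w j) + ρ (w j) < μ (w i) + ρ (w i))
    (hlast : ∀ i j : Fin (q + r), i < j → q ≤ i.val →
      μ (w j) + ρ (w j) < μ (w i) + ρ (w i)) :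
    (∑ i ∈ Finset.univ.filter (fun i : Fin (q + r) => i.val < q),
        (μ (w i) + ρ (w i) - ρ i)) <
      (∑ i ∈ Finset.univ.filter (fun i : Fin (q + r) => i.val < q), μ i) ∧
    (∑ i ∈ Finset.univ.filter (fun i : Fin (q + r) => q ≤ i.val), μ i) <
      (∑ i ∈ Finset.univ.filter (fun i : Fin (q + r) => q ≤ i.val),
        (μ (w i) + ρ (w i) - ρ i)) := by
  set ν : Fin (q + r) → ℤ := fun i => μ i + ρ i
  have hν : StrictAnti ν := fun i j hij => add_lt_add_of_le_of_lt (hμ i j hij.le) (hρ i j hij)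
  have hF : ∀ i : Fin (q + r), i.val < q → ν (w i) ≤ ν i := fun i hi =>
    hν.antitone <| Fin.le_apply_of_forall_lt_apply_lt w.injective fun j hj =>
      hν.lt_iff_gt.mp (hfirst j i hj hi)
  have hL : ∀ i : Fin (q + r), ¬i.val < q → ν i ≤ ν (w i) := fun i hi =>
    hν.antitone <| Fin.apply_le_of_forall_lt_apply_lt w.injective fun j hj =>
      hν.lt_iff_gt.mp (hlast i j hj (not_lt.mp hi))
  obtain ⟨hlt, hgt⟩ := w.sum_filter_comp_lt_of_le hw hν.injective _ hF hL
  simp only [not_lt] at hgt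
  simp only [ν, sum_add_distrib, sum_sub_distrib] at hlt hgt ⊢
  constructor <;> linarith

/-- Let `μ : Fin (q+r) → ℤ` be weakly decreasing and `ρ` strictly decreasing.
If `w ≠ 1` is a permutation such that `v = (μ + ρ) ∘ w` is strictly decreasing
on its first `q` coordinates and on its last `r` coordinates, then the sum of
the first `q` coordinates of `v - ρ` is strictly less than the sum of the first
`q` coordinates of `μ`, and the sum of the last `r` coordinates of `v - ρ` is
strictly greater than the sum of the last `r` coordinates of `μ`. -/
theorem stmt_13 (q r : ℕ) (hq : 0 < q) (hr : 0 < r)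
    (μ ρ : Fin (q + r) → ℤ)
    (hμ : ∀ i j : Fin (q + r), i ≤ j → μ j ≤ μ i)
    (hρ : ∀ i j : Fin (q + r), i < j → ρ j < ρ i)
    (w : Equiv.Perm (Fin (q + r))) (hw : w ≠ 1)
    (hfirst : ∀ i j : Fin (q + r), i < j → j.val < q →
      μ (w j) + ρ (w j) < μ (w i) + ρ (w i))
    (hlast : ∀ i j : Fin (q + r), i < j → q ≤ i.val →
      μ (w j) + ρ (w j) < μ (w i) + ρ (w i)) :
    (∑ i ∈ Finset.univ.filter (fun i : Fin (q + r) => i.val < q),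
        (μ (w i) + ρ (w i) - ρ i)) <
      (∑ i ∈ Finset.univ.filter (fun i : Fin (q + r) => i.val < q), μ i) ∧
    (∑ i ∈ Finset.univ.filter (fun i : Fin (q + r) => q ≤ i.val), μ i) <
      (∑ i ∈ Finset.univ.filter (fun i : Fin (q + r) => q ≤ i.val),
        (μ (w i) + ρ (w i) - ρ i)) :=
  stmt_13_general q r μ ρ hμ hρ w hw hfirst hlast
end
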